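/- arXiv:1804.02881 — 2 statements merged into one kernel-verified Lean document; each statement's English description precedes it below -/
import Mathlib

section
/- Assume in addition that N is an ℕ-linear combination of a_1,…,a_d. Let M be a maximal element of 𝔐. Then for every i ∈ {0,…,N−1} there exists exactly one element m ∈ M with m ≡ i (mod N); in particular, every maximal element of 𝔐 is a finite set of cardinality N. -/
/-- The set `𝒮₊ = {N + c₁a₁ + ⋯ + c_d a_d : cᵢ ∈ ℕ}` viewed inside `ℤ`. -/
def Splus (d : ℕ) (a : Fin d → ℕ) (N : ℕ) : Set ℤ :=
  { x : ℤ | ∃ c : Fin d → ℕ, x = (N : ℤ) + ∑ i, (c i : ℤ) * (a i : ℤ) }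

/-- The set `𝒮 = 𝒮₊ ∪ (−𝒮₊)`. -/
def Sfull (d : ℕ) (a : Fin d → ℕ) (N : ℕ) : Set ℤ :=
  Splus d a N ∪ (-(Splus d a N))

/-- The collection `𝔐` of subsets of `ℤ` all of whose pairwise differences avoid `𝒮`. -/
def Cliques (d : ℕ) (a : Fin d → ℕ) (N : ℕ) : Set (Set ℤ) :=
  { M : Set ℤ | ∀ m ∈ M, ∀ m' ∈ M, m - m' ∉ Sfull d a N }

/-- `M` is a maximal element of `𝔐`. -/
def IsMaximalClique (d : ℕ) (a : Fin d → ℕ) (N : ℕ) (M : Set ℤ) : Prop :=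
  M ∈ Cliques d a N ∧ ∀ M' ∈ Cliques d a N, M ⊆ M' → M' = M


lemma bezout_fin (d : ℕ) (a : Fin d → ℕ) (s : Finset (Fin d)) :
    ∃ z : Fin d → ℤ, (((s.gcd a : ℕ)) : ℤ) = ∑ i ∈ s, z i * (a i : ℤ) := by
  induction s using Finset.induction with
  | empty => exact ⟨0, by simp⟩
  | @insert j s hj ih =>
    obtain ⟨z, hz⟩ := ih
    set g : ℕ := s.gcd a with hgdef
    refine ⟨fun i => if i = j then Nat.gcdA (a j) g else Nat.gcdB (a j) g * z i, ?_⟩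
    rw [Finset.gcd_insert, Finset.sum_insert hj]
    have hg : (insert j s).gcd a = Nat.gcd (a j) g := by
      rw [Finset.gcd_insert]; rfl
    have hbez := Nat.gcd_eq_gcd_ab (a j) g
    have hrest : ∑ i ∈ s, (if i = j then Nat.gcdA (a j) g else Nat.gcdB (a j) g * z i) * (a i : ℤ)
        = Nat.gcdB (a j) g * ∑ i ∈ s, z i * (a i : ℤ) := by
      rw [Finset.mul_sum]
      refine Finset.sum_congr rfl fun i hi => ?_
      have hij : i ≠ j := fun h => hj (h ▸ hi)
      rw [if_neg hij]; ring
    beta_reduce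
    rw [if_pos rfl, hrest, ← hz]
    have : GCDMonoid.gcd (a j) g = Nat.gcd (a j) g := rfl
    rw [this]
    push_cast [hbez]
    ring

lemma exists_bound (d : ℕ) (a : Fin d → ℕ) (hgcd : Finset.univ.gcd a = 1) :
    ∃ B : ℕ, ∀ n : ℕ, B ≤ n → ∃ c : Fin d → ℕ, n = ∑ i, c i * a i := by
  obtain ⟨z, hz⟩ := bezout_fin d a Finset.univ
  rw [hgcd] at hz
  set u : Fin d → ℕ := fun i => (z i).toNat with hu
  set v : Fin d → ℕ := fun i => (-(z i)).toNat with hv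
  set q : ℕ := ∑ i, v i * a i with hq
  set p : ℕ := ∑ i, u i * a i with hp
  have hzi : ∀ i, (z i : ℤ) = (u i : ℤ) - (v i : ℤ) := by
    intro i
    simp [hu, hv]
  have hpq : (p : ℤ) = (q : ℤ) + 1 := by
    push_cast [hp, hq]
    have h4 : ∑ i, (u i : ℤ) * a i - ∑ i, (v i : ℤ) * a i = 1 := by
      have h2 : ((1:ℕ) : ℤ) = ∑ i, ((u i : ℤ) - (v i : ℤ)) * a i := by
        rw [hz]; exact Finset.sum_congr rfl fun i _ => by rw [hzi i]
      rw [← Finset.sum_sub_distrib]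
      have h3 : ∑ i, ((u i:ℤ) * a i - (v i:ℤ) * a i) = ∑ i, ((u i : ℤ) - (v i : ℤ)) * a i :=
        Finset.sum_congr rfl fun i _ => by ring
      rw [h3, ← h2]; norm_num
    linarith [h4]
  have hpq' : p = q + 1 := by exact_mod_cast hpq
  refine ⟨q * q, fun n hn => ?_⟩
  rcases Nat.eq_zero_or_pos q with hq0 | hqpos
  · refine ⟨fun i => n * u i, ?_⟩
    have hp1 : p = 1 := by omega
    calc n = n * p := by rw [hp1]; ring
    _ = ∑ i, (n * u i) * a i := by rw [hp, Finset.mul_sum]; exact Finset.sum_congr rfl fun i _ => by ring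
  · set t := n / q with ht
    set r := n % q with hr
    have hrq : r < q := Nat.mod_lt _ hqpos
    have htq : q ≤ t := by
      rw [ht, Nat.le_div_iff_mul_le hqpos]
      nlinarith
    have hrt : r ≤ t := le_trans (le_of_lt hrq) htq
    obtain ⟨s, hs⟩ := Nat.exists_eq_add_of_le hrt
    refine ⟨fun i => (t - r) * v i + r * u i, ?_⟩
    have hsum : ∑ i, ((t - r) * v i + r * u i) * a i = (t - r) * q + r * p := by
      rw [hq, hp, Finset.mul_sum, Finset.mul_sum, ← Finset.sum_add_distrib]
      exact Finset.sum_congr rfl fun i _ => by ring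
    have htr : t - r = s := by omega
    have hn' : n = q * t + r := (Nat.div_add_mod n q).symm
    rw [hsum, htr, hpq', hn', hs]
    ring

theorem stmt_2 (d : ℕ) (a : Fin d → ℕ) (ha : ∀ i, 0 < a i)
    (hgcd : Finset.univ.gcd a = 1) (N : ℕ)
    (hN : ∃ c : Fin d → ℕ, N = ∑ i, c i * a i)
    (M : Set ℤ) (hM : IsMaximalClique d a N M) :
    (∀ i : ℕ, i < N → ∃! m : ℤ, m ∈ M ∧ m ≡ (i : ℤ) [ZMOD (N : ℤ)]) ∧
      M.Finite ∧ M.ncard = N := by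
  obtain ⟨cN, hcN⟩ := hN
  have hcNZ : (N : ℤ) = ∑ i, (cN i : ℤ) * (a i : ℤ) := by exact_mod_cast hcN
  rcases Nat.eq_zero_or_pos N with hN0 | hNpos
  · -- N = 0 : M must be empty
    have hMempty : M = ∅ := by
      by_contra h
      obtain ⟨m, hm⟩ := Set.nonempty_iff_ne_empty.2 h
      have h0 : (0:ℤ) ∈ Sfull d a N := by
        left
        exact ⟨0, by simp [hN0]⟩
      exact hM.1 m hm m hm (by simpa using h0)
    subst hN0
    exact ⟨fun i hi => absurd hi (by omega), by simp [hMempty], by simp [hMempty]⟩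
  · obtain ⟨B, hB⟩ := exists_bound d a hgcd
    -- basic facts about Splus
    have splus_ge : ∀ x ∈ Splus d a N, (N:ℤ) ≤ x := by
      rintro x ⟨c, rfl⟩
      have : (0:ℤ) ≤ ∑ i, (c i : ℤ) * (a i : ℤ) :=
        Finset.sum_nonneg fun i _ => by positivity
      linarith
    have zero_not : (0:ℤ) ∉ Sfull d a N := by
      rintro (h | h)
      · have := splus_ge 0 h; omega
      · rw [Set.mem_neg] at h; have := splus_ge _ h; omega
    have sfull_neg : ∀ x : ℤ, x ∈ Sfull d a N → -x ∈ Sfull d a N := by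
      rintro x (h | h)
      · right; rwa [Set.mem_neg, neg_neg]
      · left; rwa [Set.mem_neg] at h
    have splus_large : ∀ x : ℤ, (N:ℤ) + B ≤ x → x ∈ Splus d a N := by
      intro x hx
      have hxN : (0:ℤ) ≤ x - N := by omega
      have hge : B ≤ (x - N).toNat := by omega
      obtain ⟨c, hc⟩ := hB _ hge
      refine ⟨c, ?_⟩
      have : ((x - N).toNat : ℤ) = ∑ i, (c i : ℤ) * (a i : ℤ) := by
        rw [hc]; push_cast; ring
      rw [Int.toNat_of_nonneg hxN] at this
      linarith
    have splus_sub : ∀ x y : ℤ, x ∈ Splus d a N → y ∈ Splus d a N →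
        x + y - N ∈ Splus d a N := by
      rintro x y ⟨c, rfl⟩ ⟨c', rfl⟩
      refine ⟨c + c', ?_⟩
      have hsplit : ∑ i, (((c + c') i : ℕ) : ℤ) * (a i : ℤ)
          = ∑ i, ((c i : ℤ) * (a i : ℤ) + (c' i : ℤ) * (a i : ℤ)) := by
        refine Finset.sum_congr rfl fun i _ => ?_
        simp only [Pi.add_apply]
        push_cast
        ring
      rw [hsplit, Finset.sum_add_distrib]
      ring
    have mulN_mem : ∀ k : ℤ, 1 ≤ k → k * N ∈ Splus d a N := by
      intro k hk
      refine ⟨fun i => (k-1).toNat * cN i, ?_⟩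
      have hk1 : ((k-1).toNat : ℤ) = k - 1 := Int.toNat_of_nonneg (by omega)
      have : ∑ i, (((k-1).toNat * cN i : ℕ) : ℤ) * (a i : ℤ)
          = (k - 1) * ∑ i, (cN i : ℤ) * (a i : ℤ) := by
        rw [Finset.mul_sum]
        refine Finset.sum_congr rfl fun i _ => ?_
        push_cast [hk1]; ring
      rw [this, ← hcNZ]; ring
    -- saturation from maximality
    have sat : ∀ x : ℤ, x ∉ M → ∃ m ∈ M, x - m ∈ Sfull d a N := by
      intro x hx
      by_contra h
      push_neg at h
      have hclique : insert x M ∈ Cliques d a N := by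
        rintro m (rfl | hm) m' (rfl | hm')
        · simpa using zero_not
        · exact h m' hm'
        · intro hc
          exact h m hm (by simpa using sfull_neg _ hc)
        · exact hM.1 m hm m' hm'
      have := hM.2 _ hclique (Set.subset_insert x M)
      exact hx (this ▸ Set.mem_insert x M)
    have hMne : M.Nonempty := by
      by_cases h0 : (0:ℤ) ∈ M
      · exact ⟨0, h0⟩
      · obtain ⟨m, hm, _⟩ := sat 0 h0; exact ⟨m, hm⟩
    obtain ⟨m₀, hm₀⟩ := hMne
    have hbound : ∀ m ∈ M, m₀ - (N + B) < m ∧ m < m₀ + (N + B) := by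
      intro m hm
      constructor
      · by_contra h
        push_neg at h
        have : m₀ - m ∈ Splus d a N := splus_large _ (by omega)
        exact hM.1 m₀ hm₀ m hm (Or.inl this)
      · by_contra h
        push_neg at h
        have : m - m₀ ∈ Splus d a N := splus_large _ (by omega)
        exact hM.1 m hm m₀ hm₀ (Or.inl this)
    have hMfin : M.Finite := by
      refine Set.Finite.subset (Set.finite_Icc (m₀ - (N + B)) (m₀ + (N + B))) ?_
      intro m hm
      have := hbound m hm
      exact Set.mem_Icc.2 ⟨by omega, by omega⟩
    -- uniqueness in each residue class
    have uniq : ∀ m ∈ M, ∀ m' ∈ M, m ≡ m' [ZMOD (N:ℤ)] → m = m' := by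
      intro m hm m' hm' hmod
      have hdvd : (N:ℤ) ∣ m' - m := Int.ModEq.dvd hmod
      obtain ⟨k, hk⟩ := hdvd
      rcases lt_trichotomy k 0 with hk0 | hk0 | hk0
      · have : (-k) * N ∈ Splus d a N := mulN_mem (-k) (by omega)
        have hmem : m - m' ∈ Splus d a N := by
          have h2 : m - m' = (-k) * (N:ℤ) := by
            have : m' - m = (N:ℤ) * k := hk
            linarith [this]
          rwa [h2]
        exact absurd (Or.inl hmem) (hM.1 m hm m' hm')
      · subst hk0; simp at hk; omega
      · have hkN : k * N ∈ Splus d a N := mulN_mem k (by omega)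
        have h2 : m' - m = k * (N:ℤ) := by rw [hk]; ring
        exact absurd (Or.inl (h2 ▸ hkN)) (hM.1 m' hm' m hm)
    -- existence in each residue class
    have exist : ∀ i : ℕ, i < N → ∃ m ∈ M, m ≡ (i : ℤ) [ZMOD (N:ℤ)] := by
      intro i hi
      by_contra hno
      push_neg at hno
      set P : ℤ → Prop := fun k => ∃ m ∈ M, (i : ℤ) + k * N - m ∈ Splus d a N with hP
      have hkNk : ∀ k : ℤ, 0 ≤ k → k ≤ k * N := by
        intro k hk
        nlinarith [hk, hNpos]
      have hinh : ∃ k, P k := by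
        refine ⟨|m₀| + N + B, m₀, hm₀, splus_large _ ?_⟩
        have h1 : (0:ℤ) ≤ |m₀| + N + B := by positivity
        have h2 : (|m₀| + N + B : ℤ) ≤ (|m₀| + N + B) * N := hkNk _ h1
        have h3 : m₀ ≤ |m₀| := le_abs_self m₀
        have h4 : (0:ℤ) ≤ i := Int.natCast_nonneg i
        linarith
      have hbdd : ∃ b : ℤ, ∀ k : ℤ, P k → b ≤ k := by
        refine ⟨-(|m₀| + B + i), ?_⟩
        rintro k ⟨m, hm, hs⟩
        have h1 : (N:ℤ) ≤ (i : ℤ) + k * N - m := splus_ge _ hs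
        have h2 : m₀ - (N + B) < m := (hbound m hm).1
        have h3 : -|m₀| ≤ m₀ := neg_abs_le m₀
        rcases le_or_gt 0 k with hk | hk
        · have : (0:ℤ) ≤ |m₀| + B + i := by positivity
          linarith
        · have h4 : k * N ≤ k := by nlinarith
          linarith
      obtain ⟨k₀, ⟨m, hm, hsm⟩, hmin⟩ := Int.exists_least_of_bdd hbdd hinh
      set y : ℤ := (i : ℤ) + (k₀ - 1) * N with hy
      have hyM : y ∉ M := by
        intro hyM
        refine hno y hyM ?_
        rw [Int.modEq_iff_dvd]
        exact ⟨-(k₀ - 1), by rw [hy]; ring⟩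
      obtain ⟨m', hm', hsf⟩ := sat y hyM
      rcases hsf with hps | hns
      · have : P (k₀ - 1) := ⟨m', hm', by
          have : (i:ℤ) + (k₀ - 1) * N - m' = y - m' := by rw [hy]
          rwa [this]⟩
        have := hmin _ this
        omega
      · rw [Set.mem_neg] at hns
        have hsum := splus_sub _ _ hsm hns
        have heq : (i : ℤ) + k₀ * N - m + -(y - m') - N = m' - m := by
          rw [hy]; ring
        rw [heq] at hsum
        exact hM.1 m' hm' m hm (Or.inl hsum)
    haveI : NeZero N := ⟨by omega⟩
    -- assemble
    have existsUnique : ∀ i : ℕ, i < N → ∃! m : ℤ, m ∈ M ∧ m ≡ (i : ℤ) [ZMOD (N : ℤ)] := by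
      intro i hi
      obtain ⟨m, hm, hmod⟩ := exist i hi
      exact ⟨m, ⟨hm, hmod⟩, fun y hy => uniq y hy.1 m hm (hy.2.trans hmod.symm)⟩
    refine ⟨existsUnique, hMfin, ?_⟩
    have hinj : Set.InjOn (fun m : ℤ => (m : ZMod N)) M := by
      intro m hm m' hm' h
      exact uniq m hm m' hm' ((ZMod.intCast_eq_intCast_iff m m' N).1 h)
    have himg : (fun m : ℤ => (m : ZMod N)) '' M = Set.univ := by
      apply Set.eq_univ_of_forall
      intro z
      obtain ⟨m, hm, hmod⟩ := exist z.val (ZMod.val_lt z)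
      refine ⟨m, hm, ?_⟩
      have h1 : ((m : ℤ) : ZMod N) = ((z.val : ℤ) : ZMod N) :=
        (ZMod.intCast_eq_intCast_iff m z.val N).2 hmod
      have h2 : (((z.val : ℤ)) : ZMod N) = z := by
        push_cast
        exact ZMod.natCast_rightInverse z
      simp only []
      rw [h1, h2]
    calc M.ncard = ((fun m : ℤ => (m : ZMod N)) '' M).ncard :=
          (Set.ncard_image_of_injOn hinj).symm
      _ = (Set.univ : Set (ZMod N)).ncard := by rw [himg]
      _ = Nat.card (ZMod N) := Set.ncard_univ _
      _ = N := Nat.card_zmod N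
end

section
/- Assume α_1, …, α_d span E and the family (α_i) is weakly symmetric. Then for every λ ∈ E one has B_λ = {μ ∈ B ∩ H_λ^⊥ : ⟪μ, α_i⟫ < 0 for all i ∈ T_λ}. -/
open Module

/-- The family `α` is weakly symmetric: for every line `ℓ` through the origin (i.e.
one-dimensional subspace of `E`), the convex cone generated by the `α i` lying on `ℓ`
is either `{0}` or all of `ℓ`. -/
def WeaklySymmetric {E : Type*} [NormedAddCommGroup E] [InnerProductSpace ℝ E]
    {d : ℕ} (α : Fin d → E) : Prop :=
  ∀ ℓ : Submodule ℝ E, finrank ℝ ℓ = 1 →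
    ((Submodule.span {c : ℝ // 0 ≤ c} (Set.range α ∩ ℓ) : PointedCone ℝ E) : Set E) = {0} ∨
    ((Submodule.span {c : ℝ // 0 ≤ c} (Set.range α ∩ ℓ) : PointedCone ℝ E) : Set E) = (ℓ : Set E)

/-- `T_λ = {i : ⟪λ, α i⟫ < 0}`. -/
def Tneg {E : Type*} [NormedAddCommGroup E] [InnerProductSpace ℝ E]
    {d : ℕ} (α : Fin d → E) (l : E) : Set (Fin d) :=
  { i : Fin d | (inner ℝ l (α i) : ℝ) < 0 }

/-- `H_λ = span{α i : ⟪λ, α i⟫ = 0}`. -/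
def Hsub {E : Type*} [NormedAddCommGroup E] [InnerProductSpace ℝ E]
    {d : ℕ} (α : Fin d → E) (l : E) : Submodule ℝ E :=
  Submodule.span ℝ (α '' { i : Fin d | (inner ℝ l (α i) : ℝ) = 0 })

/-- `B_λ = {μ ∈ B : T_μ = T_λ}` where `B` is the open unit ball. -/
def Bpart {E : Type*} [NormedAddCommGroup E] [InnerProductSpace ℝ E]
    {d : ℕ} (α : Fin d → E) (l : E) : Set E :=
  { μ ∈ Metric.ball (0 : E) 1 | Tneg α μ = Tneg α l }

/-- Key consequence of weak symmetry: if `α i ≠ 0`, some `α j` is a negative multiple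
of `α i`. -/
lemma exists_neg_multiple {E : Type*} [NormedAddCommGroup E] [InnerProductSpace ℝ E]
    {d : ℕ} {α : Fin d → E} (hws : WeaklySymmetric α) {i : Fin d} (hi : α i ≠ 0) :
    ∃ j : Fin d, ∃ c : ℝ, c < 0 ∧ α j = c • α i := by
  set ℓ : Submodule ℝ E := ℝ ∙ α i with hℓ
  have hrank : finrank ℝ ℓ = 1 := finrank_span_singleton hi
  have hmemℓ : α i ∈ ℓ := Submodule.mem_span_singleton_self _
  have hmemS : α i ∈ Set.range α ∩ (ℓ : Set E) := ⟨⟨i, rfl⟩, hmemℓ⟩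
  rcases hws ℓ hrank with h | h
  · exfalso
    have : α i ∈ ((Submodule.span {c : ℝ // 0 ≤ c} (Set.range α ∩ ℓ) :
        PointedCone ℝ E) : Set E) := Submodule.subset_span hmemS
    rw [h] at this
    exact hi this
  · by_contra hcon
    push_neg at hcon
    have hS : ∀ s ∈ Set.range α ∩ (ℓ : Set E), (0 : ℝ) ≤ inner ℝ (α i) s := by
      rintro s ⟨⟨j, rfl⟩, hsl⟩
      rcases Submodule.mem_span_singleton.mp hsl with ⟨t, ht⟩
      have ht0 : 0 ≤ t := by
        by_contra htneg
        push_neg at htneg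
        exact absurd ht.symm (hcon j t htneg)
      rw [← ht, real_inner_smul_right]
      have := real_inner_self_nonneg (x := α i)
      positivity
    have hneg : -α i ∈ ((Submodule.span {c : ℝ // 0 ≤ c} (Set.range α ∩ ℓ) :
        PointedCone ℝ E) : Set E) := by
      rw [h]; exact Submodule.neg_mem ℓ hmemℓ
    have key : (0 : ℝ) ≤ inner ℝ (α i) (-α i) := by
      refine Submodule.span_induction hS ?_ ?_ ?_ hneg
      · simp
      · intro x y _ _ hx hy
        rw [inner_add_right]; linarith
      · intro c x _ hx
        have : c • x = (c : ℝ) • x := rfl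
        rw [this, real_inner_smul_right]
        exact mul_nonneg c.2 hx
    rw [inner_neg_right] at key
    have : (0 : ℝ) < inner ℝ (α i) (α i) := by
      rw [real_inner_self_eq_norm_sq]
      have : 0 < ‖α i‖ := norm_pos_iff.mpr hi
      positivity
    linarith

theorem stmt_10 {E : Type*} [NormedAddCommGroup E] [InnerProductSpace ℝ E]
    [FiniteDimensional ℝ E] {d : ℕ} (α : Fin d → E)
    (hspan : Submodule.span ℝ (Set.range α) = ⊤)
    (hws : WeaklySymmetric α) (l : E) :
    Bpart α l =
      { μ : E | μ ∈ Metric.ball (0 : E) 1 ∩ ((Hsub α l)ᗮ : Set E) ∧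
        ∀ i ∈ Tneg α l, (inner ℝ μ (α i) : ℝ) < 0 } := by
  ext μ
  constructor
  · rintro ⟨hball, hT⟩
    have hzero : ∀ i : Fin d, (inner ℝ l (α i) : ℝ) = 0 → (inner ℝ μ (α i) : ℝ) = 0 := by
      intro i hli
      rcases lt_trichotomy ((inner ℝ μ (α i) : ℝ)) 0 with hlt | heq | hgt
      · have : i ∈ Tneg α μ := hlt
        rw [hT] at this
        exact absurd hli (ne_of_lt this)
      · exact heq
      · have hne : α i ≠ 0 := by
          intro h0; rw [h0, inner_zero_right] at hgt; exact lt_irrefl _ hgt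
        obtain ⟨j, c, hc, hj⟩ := exists_neg_multiple hws hne
        have hμj : (inner ℝ μ (α j) : ℝ) < 0 := by
          rw [hj, real_inner_smul_right]
          exact mul_neg_of_neg_of_pos hc hgt
        have : j ∈ Tneg α μ := hμj
        rw [hT] at this
        have hlj : (inner ℝ l (α j) : ℝ) = 0 := by
          rw [hj, real_inner_smul_right, hli, mul_zero]
        exact absurd hlj (ne_of_lt this)
    refine ⟨⟨hball, ?_⟩, ?_⟩
    · -- μ ∈ (Hsub α l)ᗮ
      show μ ∈ (Hsub α l)ᗮ
      rw [Submodule.mem_orthogonal]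
      intro u hu
      refine Submodule.span_induction ?_ ?_ ?_ ?_ hu
      · rintro x ⟨i, hi, rfl⟩
        rw [real_inner_comm]
        exact hzero i hi
      · simp
      · intro x y _ _ hx hy; rw [inner_add_left]; rw [hx, hy]; ring
      · intro c x _ hx; rw [real_inner_smul_left, hx, mul_zero]
    · intro i hi
      have : i ∈ Tneg α μ := by rw [hT]; exact hi
      exact this
  · rintro ⟨⟨hball, horth⟩, hneg⟩
    refine ⟨hball, ?_⟩
    ext i
    simp only [Tneg, Set.mem_setOf_eq]
    constructor
    · intro hμi
      rcases lt_trichotomy ((inner ℝ l (α i) : ℝ)) 0 with hlt | heq | hgt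
      · exact hlt
      · exfalso
        have hmem : α i ∈ Hsub α l := Submodule.subset_span ⟨i, heq, rfl⟩
        have := Submodule.inner_right_of_mem_orthogonal hmem horth
        rw [real_inner_comm] at this
        rw [this] at hμi
        exact lt_irrefl _ hμi
      · exfalso
        have hne : α i ≠ 0 := by
          intro h0; rw [h0, inner_zero_right] at hμi; exact lt_irrefl _ hμi
        obtain ⟨j, c, hc, hj⟩ := exists_neg_multiple hws hne
        have hlj : j ∈ Tneg α l := by
          show (inner ℝ l (α j) : ℝ) < 0
          rw [hj, real_inner_smul_right]
          exact mul_neg_of_neg_of_pos hc hgt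
        have := hneg j hlj
        rw [hj, real_inner_smul_right] at this
        nlinarith
    · exact fun h => hneg i h
end
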